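/- The function d(p₁,p₂) = min{d₁(p₁,p₂), d₂(p₁,p₂)} defined on P₀ = S^m × (0,π)^K is a pseudometric: it is nonnegative, symmetric, satisfies d(p,p) = 0, and satisfies the triangle inequality. Moreover d(p₁,p₂) = 0 if and only if p₂ = p₁ or p₂ = (−c₁, π·1 − r¹). -/

import Mathlib

open RealInnerProductSpace

noncomputable def subsphereDistOne {m K : ℕ}
    (p q : EuclideanSpace ℝ (Fin (m + 1)) × (Fin K → ℝ)) : ℝ :=
  Real.sqrt (Real.arccos ⟪p.1, q.1⟫ ^ 2 + ∑ j, (p.2 j - q.2 j) ^ 2)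

noncomputable def subsphereDistTwo {m K : ℕ}
    (p q : EuclideanSpace ℝ (Fin (m + 1)) × (Fin K → ℝ)) : ℝ :=
  Real.sqrt (Real.arccos (-⟪p.1, q.1⟫) ^ 2 + ∑ j, ((Real.pi - p.2 j) - q.2 j) ^ 2)

noncomputable def subsphereDist {m K : ℕ}
    (p q : EuclideanSpace ℝ (Fin (m + 1)) × (Fin K → ℝ)) : ℝ :=
  min (subsphereDistOne p q) (subsphereDistTwo p q)

def P₀ (m K : ℕ) : Set (EuclideanSpace ℝ (Fin (m + 1)) × (Fin K → ℝ)) :=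
  {p | ‖p.1‖ = 1 ∧ ∀ j, p.2 j ∈ Set.Ioo 0 Real.pi}

/-! The map `σ (c, r) = (-c, π·1 - r)` is an involutive isometry of `d₁` with
`d₂ (p, q) = d₁ (p, σ q)`, so `d (p, q) = min (d₁ (p, q)) (d₁ (p, σ q))` is the distance between
the orbits `{p, σ p}` and `{q, σ q}`, and inherits the pseudometric axioms from `d₁`. On unit
vectors `arccos ⟪c₁, c₂⟫` is the spherical angle, which satisfies the triangle inequality, and
`d₁` is the `ℓ²`-combination of that angle with the Euclidean distance of the radii, so Minkowski's
inequality makes `d₁` a metric. -/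

open InnerProductGeometry Function Set

theorem sqrt_sq_add_sq_le_of_le_add {a b a₁ b₁ a₂ b₂ : ℝ} (ha : 0 ≤ a) (hb : 0 ≤ b)
    (ha' : a ≤ a₁ + a₂) (hb' : b ≤ b₁ + b₂) :
    √(a ^ 2 + b ^ 2) ≤ √(a₁ ^ 2 + b₁ ^ 2) + √(a₂ ^ 2 + b₂ ^ 2) := by
  have hnorm : ∀ u v : ℝ, ‖WithLp.toLp 2 (u, v)‖ = √(u ^ 2 + v ^ 2) := fun u v => by
    simp [WithLp.prod_norm_eq_of_L2]
  calc √(a ^ 2 + b ^ 2) ≤ √((a₁ + a₂) ^ 2 + (b₁ + b₂) ^ 2) := by gcongr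
    _ = ‖WithLp.toLp 2 (a₁, b₁) + WithLp.toLp 2 (a₂, b₂)‖ := by
      rw [← WithLp.toLp_add, Prod.mk_add_mk, hnorm]
    _ ≤ _ := (norm_add_le _ _).trans_eq (by rw [hnorm, hnorm])

theorem InnerProductGeometry.angle_eq_zero_iff_of_norm_eq_one {V : Type*}
    [NormedAddCommGroup V] [InnerProductSpace ℝ V] {x y : V} (hx : ‖x‖ = 1) (hy : ‖y‖ = 1) :
    angle x y = 0 ↔ x = y := by
  rw [angle, hx, hy, mul_one, div_one, Real.arccos_eq_zero,
    (real_inner_le_one_of_norm_eq_one hx hy).ge_iff_eq, inner_eq_one_iff_of_norm_eq_one hx hy]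

section InvolutionMin

variable {α : Type*} {d : α → α → ℝ} {σ : α → α} {S : Set α}

theorem min_comm_of_involutive (hσ : Involutive σ) (hiso : ∀ x y, d (σ x) (σ y) = d x y)
    (hcomm : ∀ x y, d x y = d y x) (x y : α) :
    min (d x y) (d x (σ y)) = min (d y x) (d y (σ x)) := by
  have hcross : d x (σ y) = d y (σ x) := by rw [← hiso x (σ y), hσ y, hcomm]
  rw [hcross, hcomm x y]

theorem min_triangle_of_involutive (hσ : Involutive σ) (hiso : ∀ x y, d (σ x) (σ y) = d x y)
    (hS : MapsTo σ S S) (htri : ∀ x ∈ S, ∀ y ∈ S, ∀ z ∈ S, d x z ≤ d x y + d y z)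
    {x y z : α} (hx : x ∈ S) (hy : y ∈ S) (hz : z ∈ S) :
    min (d x z) (d x (σ z)) ≤ min (d x y) (d x (σ y)) + min (d y z) (d y (σ z)) := by
  have h₁ : d x z ≤ d x y + d y z := htri x hx y hy z hz
  have h₂ : d x (σ z) ≤ d x y + d y (σ z) := htri x hx y hy _ (hS hz)
  have h₃ : d x (σ z) ≤ d x (σ y) + d y z := by
    simpa only [hiso] using htri x hx _ (hS hy) _ (hS hz)
  have h₄ : d x z ≤ d x (σ y) + d y (σ z) := by
    simpa only [← hiso y (σ z), hσ z] using htri x hx _ (hS hy) z hz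
  rcases min_choice (d x y) (d x (σ y)) with h | h <;>
    rcases min_choice (d y z) (d y (σ z)) with h' | h' <;> rw [h, h'] <;>
    linarith [min_le_left (d x z) (d x (σ z)), min_le_right (d x z) (d x (σ z))]

theorem min_eq_zero_iff_of_involutive (hσ : Involutive σ) (hS : MapsTo σ S S)
    (hnonneg : ∀ x y, 0 ≤ d x y) (hzero : ∀ x ∈ S, ∀ y ∈ S, d x y = 0 ↔ y = x)
    {x y : α} (hx : x ∈ S) (hy : y ∈ S) :
    min (d x y) (d x (σ y)) = 0 ↔ y = x ∨ y = σ x := by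
  rw [← hzero x hx y hy, ← hσ.eq_iff, ← hzero x hx _ (hS hy)]
  constructor
  · intro h
    rcases min_choice (d x y) (d x (σ y)) with h' | h' <;> rw [h'] at h <;> simp [h]
  · rintro (h | h) <;> rw [h]
    · exact min_eq_left (hnonneg _ _)
    · exact min_eq_right (hnonneg _ _)

end InvolutionMin

section Subsphere

variable {m K : ℕ}

noncomputable def subsphereFlip (p : EuclideanSpace ℝ (Fin (m + 1)) × (Fin K → ℝ)) :
    EuclideanSpace ℝ (Fin (m + 1)) × (Fin K → ℝ) :=
  (-p.1, fun j => Real.pi - p.2 j)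

theorem subsphereFlip_involutive :
    Involutive (subsphereFlip : EuclideanSpace ℝ (Fin (m + 1)) × (Fin K → ℝ) → _) := fun p =>
  Prod.ext (neg_neg p.1) (funext fun j => sub_sub_cancel Real.pi (p.2 j))

theorem mapsTo_subsphereFlip : MapsTo subsphereFlip (P₀ m K) (P₀ m K) := fun p ⟨hc, hr⟩ =>
  ⟨by simpa [subsphereFlip] using hc, fun j => ⟨by simpa [subsphereFlip] using (hr j).2,
    by simpa [subsphereFlip] using (hr j).1⟩⟩

variable (p q : EuclideanSpace ℝ (Fin (m + 1)) × (Fin K → ℝ))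

theorem subsphereDistOne_nonneg : 0 ≤ subsphereDistOne p q := Real.sqrt_nonneg _

theorem subsphereDistOne_comm : subsphereDistOne p q = subsphereDistOne q p := by
  simp only [subsphereDistOne, real_inner_comm p.1, ← neg_sub (q.2 _), neg_sq]

theorem subsphereDistOne_subsphereFlip :
    subsphereDistOne (subsphereFlip p) (subsphereFlip q) = subsphereDistOne p q := by
  simp only [subsphereDistOne, subsphereFlip, inner_neg_neg]
  congr! 3 with j
  ring

theorem subsphereDistTwo_eq : subsphereDistTwo p q = subsphereDistOne p (subsphereFlip q) := by
  simp only [subsphereDistTwo, subsphereDistOne, subsphereFlip, inner_neg_right]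
  congr! 3 with j
  ring

theorem subsphereDist_eq_min :
    subsphereDist p q = min (subsphereDistOne p q) (subsphereDistOne p (subsphereFlip q)) := by
  rw [subsphereDist, subsphereDistTwo_eq]

variable {p q t : EuclideanSpace ℝ (Fin (m + 1)) × (Fin K → ℝ)}

theorem subsphereDistOne_eq_sqrt_angle_dist (hp : ‖p.1‖ = 1) (hq : ‖q.1‖ = 1) :
    subsphereDistOne p q =
      √(angle p.1 q.1 ^ 2 + dist (WithLp.toLp 2 p.2) (WithLp.toLp 2 q.2) ^ 2) := by
  simp [subsphereDistOne, angle, hp, hq, EuclideanSpace.dist_sq_eq, Real.dist_eq, sq_abs]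

theorem subsphereDistOne_triangle (hp : ‖p.1‖ = 1) (hq : ‖q.1‖ = 1) (ht : ‖t.1‖ = 1) :
    subsphereDistOne p q ≤ subsphereDistOne p t + subsphereDistOne t q := by
  rw [subsphereDistOne_eq_sqrt_angle_dist hp hq, subsphereDistOne_eq_sqrt_angle_dist hp ht,
    subsphereDistOne_eq_sqrt_angle_dist ht hq]
  exact sqrt_sq_add_sq_le_of_le_add (angle_nonneg _ _) dist_nonneg
    (angle_le_angle_add_angle _ _ _) (dist_triangle _ _ _)

theorem subsphereDistOne_eq_zero_iff (hp : ‖p.1‖ = 1) (hq : ‖q.1‖ = 1) :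
    subsphereDistOne p q = 0 ↔ q = p := by
  rw [subsphereDistOne_eq_sqrt_angle_dist hp hq, Real.sqrt_eq_zero (by positivity),
    add_eq_zero_iff_of_nonneg (sq_nonneg _) (sq_nonneg _), sq_eq_zero_iff, sq_eq_zero_iff,
    dist_eq_zero, (WithLp.toLp_injective 2).eq_iff, angle_eq_zero_iff_of_norm_eq_one hp hq,
    Prod.ext_iff, eq_comm, eq_comm (a := p.2)]

end Subsphere

theorem subsphereDist_pseudometric_general {m K : ℕ} :
    (∀ p₁ ∈ P₀ m K, ∀ p₂ ∈ P₀ m K, 0 ≤ subsphereDist p₁ p₂) ∧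
    (∀ p₁ ∈ P₀ m K, ∀ p₂ ∈ P₀ m K, subsphereDist p₁ p₂ = subsphereDist p₂ p₁) ∧
    (∀ p ∈ P₀ m K, subsphereDist p p = 0) ∧
    (∀ p₁ ∈ P₀ m K, ∀ p₂ ∈ P₀ m K, ∀ p₃ ∈ P₀ m K,
      subsphereDist p₁ p₂ ≤ subsphereDist p₁ p₃ + subsphereDist p₃ p₂) ∧
    (∀ p₁ ∈ P₀ m K, ∀ p₂ ∈ P₀ m K,
      (subsphereDist p₁ p₂ = 0 ↔
        p₂ = p₁ ∨ p₂ = (-p₁.1, fun j => Real.pi - p₁.2 j))) := by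
  have hflip := subsphereFlip_involutive (m := m) (K := K)
  have hiso := subsphereDistOne_subsphereFlip (m := m) (K := K)
  have htri : ∀ p ∈ P₀ m K, ∀ t ∈ P₀ m K, ∀ q ∈ P₀ m K,
      subsphereDistOne p q ≤ subsphereDistOne p t + subsphereDistOne t q :=
    fun p hp t ht q hq => subsphereDistOne_triangle hp.1 hq.1 ht.1
  have hzero : ∀ p ∈ P₀ m K, ∀ q ∈ P₀ m K, subsphereDistOne p q = 0 ↔ q = p :=
    fun p hp q hq => subsphereDistOne_eq_zero_iff hp.1 hq.1
  have hzero_min := fun {p q} => min_eq_zero_iff_of_involutive hflip mapsTo_subsphereFlip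
    subsphereDistOne_nonneg hzero (x := p) (y := q)
  simp only [subsphereDist_eq_min]
  exact ⟨fun p _ q _ => le_min (subsphereDistOne_nonneg _ _) (subsphereDistOne_nonneg _ _),
    fun p _ q _ => min_comm_of_involutive hflip hiso subsphereDistOne_comm p q,
    fun p hp => (hzero_min hp hp).2 (Or.inl rfl),
    fun p₁ h₁ p₂ h₂ p₃ h₃ =>
      min_triangle_of_involutive hflip hiso mapsTo_subsphereFlip htri h₁ h₃ h₂,
    fun p₁ h₁ p₂ h₂ => hzero_min h₁ h₂⟩

/-- `d = min{d₁, d₂}` is a pseudometric on `P₀ = S^m × (0,π)^K`: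
nonnegative, symmetric, zero on the diagonal, satisfies the triangle
inequality, and `d(p₁,p₂) = 0` iff `p₂ = p₁` or `p₂ = (−c₁, π·1 − r¹)`. -/
theorem subsphereDist_pseudometric {m K : ℕ} (hK : 1 ≤ K) :
    (∀ p₁ ∈ P₀ m K, ∀ p₂ ∈ P₀ m K, 0 ≤ subsphereDist p₁ p₂) ∧
    (∀ p₁ ∈ P₀ m K, ∀ p₂ ∈ P₀ m K, subsphereDist p₁ p₂ = subsphereDist p₂ p₁) ∧
    (∀ p ∈ P₀ m K, subsphereDist p p = 0) ∧
    (∀ p₁ ∈ P₀ m K, ∀ p₂ ∈ P₀ m K, ∀ p₃ ∈ P₀ m K,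
      subsphereDist p₁ p₂ ≤ subsphereDist p₁ p₃ + subsphereDist p₃ p₂) ∧
    (∀ p₁ ∈ P₀ m K, ∀ p₂ ∈ P₀ m K,
      (subsphereDist p₁ p₂ = 0 ↔
        p₂ = p₁ ∨ p₂ = (-p₁.1, fun j => Real.pi - p₁.2 j))) :=
  subsphereDist_pseudometric_general
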